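/- arXiv:2403.18261 — 3 statements merged into one kernel-verified Lean document; each statement's English description precedes it below -/
import Mathlib

section
/- Let f_1, …, f_k (k ≥ 1) be compactly supported C¹ contactomorphisms of (ℝ^{2n+1}, α₀) with C¹ conformal exponents, and set μ₁*(𝐟) := max_i μ₁*(f_i), M₀*(𝐟) := max_i μ₀*(f_i), M₁*(𝐟) := max_i max{μ₀*(f_i), μ₁*(f_i)}. Then the composition f_1 ∘ ⋯ ∘ f_k satisfies μ₁*(f_1∘⋯∘f_k) ≤ k · μ₁*(𝐟) · ((1 + M₀*(𝐟))(1 + M₁*(𝐟)))^{k−1}. -/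
open scoped BigOperators ENNReal
open Function Set

noncomputable section

/-- The contact Euclidean space `ℝ^{2n+1} = ℝ × ℝⁿ × ℝⁿ` with coordinates `(z, q, p)`. -/
abbrev E (n : ℕ) : Type := ℝ × (Fin n → ℝ) × (Fin n → ℝ)

/-- The standard contact form `α₀ = dz − Σᵢ pᵢ dqᵢ`, as a family of linear functionals. -/
def alpha0 {n : ℕ} (x v : E n) : ℝ := v.1 - ∑ i, x.2.2 i * v.2.1 i

/-- `f` is a contactomorphism of `(ℝ^{2n+1}, α₀)` with conformal exponent `ℓ`. -/
def IsContacto {n : ℕ} (f : E n → E n) (ℓ : E n → ℝ) : Prop :=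
  ∀ x v, alpha0 (f x) (fderiv ℝ f x v) = Real.exp (ℓ x) * alpha0 x v

/-- `‖D^s u‖_∞`: the (extended-real-valued) supremum over `x` of the operator norm of the
`s`-th total (Fréchet) derivative of `u`. -/
def supDeriv {n : ℕ} {F : Type*} [NormedAddCommGroup F] [NormedSpace ℝ F]
    (s : ℕ) (u : E n → F) : ℝ≥0∞ :=
  ⨆ x : E n, (‖iteratedFDeriv ℝ s u x‖₊ : ℝ≥0∞)

/-- `μ_s*(f) = max{‖D^s(f − id)‖_∞, ‖D^s ℓ_f‖_∞}`. -/
def muStar {n : ℕ} (s : ℕ) (f : E n → E n) (ℓ : E n → ℝ) : ℝ≥0∞ :=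
  max (supDeriv s (fun y => f y - y)) (supDeriv s ℓ)

/-- `M_r*(f) = max{μ_0*(f), …, μ_r*(f)}`. -/
def MStar {n : ℕ} (r : ℕ) (f : E n → E n) (ℓ : E n → ℝ) : ℝ≥0∞ :=
  (Finset.range (r + 1)).sup fun s => muStar s f ℓ

namespace MuStarAux

variable {n : ℕ}

/-- Composition of a list of maps. -/
def lcomp (fs : List (E n → E n)) : E n → E n := fs.foldr (· ∘ ·) id

/-- The conformal exponent of the composition of a list of contactomorphisms. -/
def lexp : List ((E n → E n) × (E n → ℝ)) → E n → ℝ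
  | [], _ => 0
  | p :: t, x => p.2 (lcomp (t.map Prod.fst) x) + lexp t x

lemma lcomp_cons (g : E n → E n) (t : List (E n → E n)) :
    lcomp (g :: t) = g ∘ lcomp t := rfl

lemma lcomp_contDiff {fs : List (E n → E n)} (h : ∀ g ∈ fs, ContDiff ℝ 1 g) :
    ContDiff ℝ 1 (lcomp fs) := by
  induction fs with
  | nil => exact contDiff_id
  | cons g t ih =>
    exact (h g (by simp)).comp (ih fun g' hg' => h g' (by simp [hg']))

lemma lexp_contDiff {ps : List ((E n → E n) × (E n → ℝ))}
    (h1 : ∀ p ∈ ps, ContDiff ℝ 1 p.1) (h2 : ∀ p ∈ ps, ContDiff ℝ 1 p.2) :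
    ContDiff ℝ 1 (lexp ps) := by
  induction ps with
  | nil => exact contDiff_const
  | cons p t ih =>
    have hcomp : ContDiff ℝ 1 (lcomp (t.map Prod.fst)) := by
      refine lcomp_contDiff fun g hg => ?_
      rcases List.mem_map.1 hg with ⟨q, hq, rfl⟩
      exact h1 q (by simp [hq])
    exact ((h2 p (by simp)).comp hcomp).add
      (ih (fun q hq => h1 q (by simp [hq])) (fun q hq => h2 q (by simp [hq])))

lemma eadd_le {F : Type*} [NormedAddCommGroup F] (A B : F) :
    (‖A + B‖₊ : ℝ≥0∞) ≤ (‖A‖₊ : ℝ≥0∞) + (‖B‖₊ : ℝ≥0∞) := by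
  rw [← ENNReal.coe_add]
  exact ENNReal.coe_le_coe.2 (nnnorm_add_le _ _)

lemma ecomp_le {F G H : Type*} [NormedAddCommGroup F] [NormedAddCommGroup G]
    [NormedAddCommGroup H] [NormedSpace ℝ F] [NormedSpace ℝ G] [NormedSpace ℝ H]
    (A : G →L[ℝ] H) (B : F →L[ℝ] G) :
    (‖A.comp B‖₊ : ℝ≥0∞) ≤ (‖A‖₊ : ℝ≥0∞) * (‖B‖₊ : ℝ≥0∞) := by
  rw [← ENNReal.coe_mul]
  exact ENNReal.coe_le_coe.2 (ContinuousLinearMap.opNNNorm_comp_le _ _)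

lemma eid_le : (‖ContinuousLinearMap.id ℝ (E n)‖₊ : ℝ≥0∞) ≤ 1 :=
  ENNReal.coe_le_one_iff.2 (by exact_mod_cast ContinuousLinearMap.norm_id_le)

lemma opnorm_le_one_add {T : E n →L[ℝ] E n} {a : ℝ≥0∞}
    (hb : (‖T - ContinuousLinearMap.id ℝ (E n)‖₊ : ℝ≥0∞) ≤ a) :
    (‖T‖₊ : ℝ≥0∞) ≤ 1 + a := by
  have key := eadd_le (T - ContinuousLinearMap.id ℝ (E n)) (ContinuousLinearMap.id ℝ (E n))
  rw [sub_add_cancel] at key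
  calc (‖T‖₊ : ℝ≥0∞)
      ≤ (‖T - ContinuousLinearMap.id ℝ (E n)‖₊ : ℝ≥0∞)
        + (‖ContinuousLinearMap.id ℝ (E n)‖₊ : ℝ≥0∞) := key
    _ ≤ a + 1 := add_le_add hb eid_le
    _ = 1 + a := by rw [add_comm]

/-- Bound for the derivative of a composition. -/
lemma fderiv_lcomp_norm_le {fs : List (E n → E n)} {a : ℝ≥0∞}
    (hcd : ∀ g ∈ fs, ContDiff ℝ 1 g)
    (hb : ∀ g ∈ fs, ∀ y, (‖fderiv ℝ g y - ContinuousLinearMap.id ℝ (E n)‖₊ : ℝ≥0∞) ≤ a)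
    (x : E n) :
    (‖fderiv ℝ (lcomp fs) x‖₊ : ℝ≥0∞) ≤ (1 + a) ^ fs.length := by
  induction fs generalizing x with
  | nil =>
    simp only [lcomp, List.foldr_nil, fderiv_id, List.length_nil, pow_zero]
    exact eid_le
  | cons g t ih =>
    have hg : ContDiff ℝ 1 g := hcd g (by simp)
    have ht : ContDiff ℝ 1 (lcomp t) := lcomp_contDiff fun g' hg' => hcd g' (by simp [hg'])
    rw [lcomp_cons, fderiv_comp x (hg.differentiable one_ne_zero _) (ht.differentiable one_ne_zero _)]
    calc (‖(fderiv ℝ g (lcomp t x)).comp (fderiv ℝ (lcomp t) x)‖₊ : ℝ≥0∞)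
        ≤ (‖fderiv ℝ g (lcomp t x)‖₊ : ℝ≥0∞) * (‖fderiv ℝ (lcomp t) x‖₊ : ℝ≥0∞) := by
          exact MuStarAux.ecomp_le _ _
      _ ≤ (1 + a) * (1 + a) ^ t.length := by
          exact mul_le_mul' (opnorm_le_one_add (hb g (by simp) _))
            (ih (fun g' hg' => hcd g' (by simp [hg']))
              (fun g' hg' y => hb g' (by simp [hg']) y) x)
      _ = (1 + a) ^ (g :: t).length := by rw [List.length_cons, pow_succ, mul_comm]

/-- Telescoping bound for the derivative of composition minus identity. -/
lemma fderiv_lcomp_sub_id_le {fs : List (E n → E n)} {a : ℝ≥0∞}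
    (hcd : ∀ g ∈ fs, ContDiff ℝ 1 g)
    (hb : ∀ g ∈ fs, ∀ y, (‖fderiv ℝ g y - ContinuousLinearMap.id ℝ (E n)‖₊ : ℝ≥0∞) ≤ a)
    (x : E n) :
    (‖fderiv ℝ (lcomp fs) x - ContinuousLinearMap.id ℝ (E n)‖₊ : ℝ≥0∞) ≤
      (fs.length : ℝ≥0∞) * a * (1 + a) ^ (fs.length - 1) := by
  induction fs generalizing x with
  | nil => simp [lcomp, fderiv_id]
  | cons g t ih =>
    have hg : ContDiff ℝ 1 g := hcd g (by simp)
    have ht : ContDiff ℝ 1 (lcomp t) := lcomp_contDiff fun g' hg' => hcd g' (by simp [hg'])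
    have hsplit : fderiv ℝ (lcomp (g :: t)) x - ContinuousLinearMap.id ℝ (E n) =
        (fderiv ℝ g (lcomp t x) - ContinuousLinearMap.id ℝ (E n)).comp
            (fderiv ℝ (lcomp t) x)
          + (fderiv ℝ (lcomp t) x - ContinuousLinearMap.id ℝ (E n)) := by
      rw [lcomp_cons, fderiv_comp x (hg.differentiable one_ne_zero _) (ht.differentiable one_ne_zero _),
        ContinuousLinearMap.sub_comp, ContinuousLinearMap.id_comp]
      abel
    have ih' := ih (fun g' hg' => hcd g' (by simp [hg']))
      (fun g' hg' y => hb g' (by simp [hg']) y) x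
    have hDt := fderiv_lcomp_norm_le (fun g' hg' => hcd g' (by simp [hg']))
      (fun g' hg' y => hb g' (by simp [hg']) y) x (fs := t)
    calc (‖fderiv ℝ (lcomp (g :: t)) x - ContinuousLinearMap.id ℝ (E n)‖₊ : ℝ≥0∞)
        ≤ (‖(fderiv ℝ g (lcomp t x) - ContinuousLinearMap.id ℝ (E n)).comp
              (fderiv ℝ (lcomp t) x)‖₊ : ℝ≥0∞)
          + (‖fderiv ℝ (lcomp t) x - ContinuousLinearMap.id ℝ (E n)‖₊ : ℝ≥0∞) := by
          rw [hsplit]; exact MuStarAux.eadd_le _ _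
      _ ≤ a * (1 + a) ^ t.length + (t.length : ℝ≥0∞) * a * (1 + a) ^ (t.length - 1) := by
          refine add_le_add ?_ ih'
          calc (‖(fderiv ℝ g (lcomp t x) - ContinuousLinearMap.id ℝ (E n)).comp
                  (fderiv ℝ (lcomp t) x)‖₊ : ℝ≥0∞)
              ≤ (‖fderiv ℝ g (lcomp t x) - ContinuousLinearMap.id ℝ (E n)‖₊ : ℝ≥0∞)
                * (‖fderiv ℝ (lcomp t) x‖₊ : ℝ≥0∞) := by
                exact MuStarAux.ecomp_le _ _
            _ ≤ a * (1 + a) ^ t.length := mul_le_mul' (hb g (by simp) _) hDt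
      _ ≤ ((g :: t).length : ℝ≥0∞) * a * (1 + a) ^ ((g :: t).length - 1) := by
          have h1 : (1 + a) ^ (t.length - 1) ≤ (1 + a) ^ t.length :=
            pow_le_pow_right' le_self_add (Nat.sub_le _ _)
          calc a * (1 + a) ^ t.length + (t.length : ℝ≥0∞) * a * (1 + a) ^ (t.length - 1)
              ≤ a * (1 + a) ^ t.length + (t.length : ℝ≥0∞) * a * (1 + a) ^ t.length := by
                gcongr
            _ = ((t.length : ℝ≥0∞) + 1) * a * (1 + a) ^ t.length := by ring
            _ = ((g :: t).length : ℝ≥0∞) * a * (1 + a) ^ ((g :: t).length - 1) := by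
                rw [List.length_cons, Nat.add_sub_cancel]
                push_cast
                ring

/-- The composition of contactomorphisms is a contactomorphism with summed exponent. -/
lemma isContacto_lcomp {ps : List ((E n → E n) × (E n → ℝ))}
    (hcd : ∀ p ∈ ps, ContDiff ℝ 1 p.1)
    (hc : ∀ p ∈ ps, IsContacto p.1 p.2) :
    IsContacto (lcomp (ps.map Prod.fst)) (lexp ps) := by
  induction ps with
  | nil =>
    intro x v
    simp [lcomp, lexp, fderiv_id, alpha0]
  | cons p t ih =>
    intro x v
    have hp1 : ContDiff ℝ 1 p.1 := hcd p (by simp)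
    have ht : ContDiff ℝ 1 (lcomp (t.map Prod.fst)) := by
      refine lcomp_contDiff fun g hg => ?_
      rcases List.mem_map.1 hg with ⟨q, hq, rfl⟩
      exact hcd q (by simp [hq])
    have hmap : (p :: t).map Prod.fst = p.1 :: t.map Prod.fst := rfl
    rw [hmap, lcomp_cons,
      fderiv_comp x (hp1.differentiable one_ne_zero _) (ht.differentiable one_ne_zero _)]
    have h1 := hc p (by simp) (lcomp (t.map Prod.fst) x) (fderiv ℝ (lcomp (t.map Prod.fst)) x v)
    have h2 := ih (fun q hq => hcd q (by simp [hq])) (fun q hq => hc q (by simp [hq])) x v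
    simp only [Function.comp_apply, ContinuousLinearMap.coe_comp', lexp]
    rw [h1, h2, Real.exp_add]
    ring

/-- Uniqueness of the conformal exponent. -/
lemma contacto_exp_unique {F : E n → E n} {L L' : E n → ℝ}
    (h : IsContacto F L) (h' : IsContacto F L') : L = L' := by
  funext x
  have h1 := h x (1, 0, 0)
  have h2 := h' x (1, 0, 0)
  have ha : alpha0 x ((1, 0, 0) : E n) = 1 := by simp [alpha0]
  rw [ha, mul_one] at h1 h2
  exact Real.exp_injective (h2 ▸ h1.symm ▸ rfl)

/-- Bound for the derivative of the summed exponent. -/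
lemma fderiv_lexp_le {ps : List ((E n → E n) × (E n → ℝ))} {a : ℝ≥0∞}
    (h1 : ∀ p ∈ ps, ContDiff ℝ 1 p.1) (h2 : ∀ p ∈ ps, ContDiff ℝ 1 p.2)
    (hb : ∀ p ∈ ps, ∀ y, (‖fderiv ℝ p.1 y - ContinuousLinearMap.id ℝ (E n)‖₊ : ℝ≥0∞) ≤ a)
    (hbl : ∀ p ∈ ps, ∀ y, (‖fderiv ℝ p.2 y‖₊ : ℝ≥0∞) ≤ a)
    (x : E n) :
    (‖fderiv ℝ (lexp ps) x‖₊ : ℝ≥0∞) ≤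
      (ps.length : ℝ≥0∞) * a * (1 + a) ^ (ps.length - 1) := by
  induction ps generalizing x with
  | nil => simp [lexp]
  | cons p t ih =>
    have hp2 : ContDiff ℝ 1 p.2 := h2 p (by simp)
    have ht : ContDiff ℝ 1 (lcomp (t.map Prod.fst)) := by
      refine lcomp_contDiff fun g hg => ?_
      rcases List.mem_map.1 hg with ⟨q, hq, rfl⟩
      exact h1 q (by simp [hq])
    have htl : ContDiff ℝ 1 (lexp t) :=
      lexp_contDiff (fun q hq => h1 q (by simp [hq])) (fun q hq => h2 q (by simp [hq]))
    have hH : DifferentiableAt ℝ (lcomp (t.map Prod.fst)) x := ht.differentiable one_ne_zero _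
    have hEq : fderiv ℝ (lexp (p :: t)) x =
        (fderiv ℝ p.2 (lcomp (t.map Prod.fst) x)).comp (fderiv ℝ (lcomp (t.map Prod.fst)) x)
          + fderiv ℝ (lexp t) x := by
      have hrw : lexp (p :: t) = fun y => (p.2 ∘ lcomp (t.map Prod.fst)) y + lexp t y := rfl
      rw [hrw, fderiv_fun_add ((hp2.differentiable one_ne_zero _).comp x hH)
          (htl.differentiable one_ne_zero _),
        fderiv_comp x (hp2.differentiable one_ne_zero _) hH]
    have hbmap : ∀ g ∈ t.map Prod.fst, ∀ y,
        (‖fderiv ℝ g y - ContinuousLinearMap.id ℝ (E n)‖₊ : ℝ≥0∞) ≤ a := by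
      intro g hg y
      rcases List.mem_map.1 hg with ⟨q, hq, rfl⟩
      exact hb q (by simp [hq]) y
    have hcdmap : ∀ g ∈ t.map Prod.fst, ContDiff ℝ 1 g := by
      intro g hg
      rcases List.mem_map.1 hg with ⟨q, hq, rfl⟩
      exact h1 q (by simp [hq])
    have hDt := fderiv_lcomp_norm_le hcdmap hbmap x
    rw [List.length_map] at hDt
    have ih' := ih (fun q hq => h1 q (by simp [hq])) (fun q hq => h2 q (by simp [hq]))
      (fun q hq y => hb q (by simp [hq]) y) (fun q hq y => hbl q (by simp [hq]) y) x
    calc (‖fderiv ℝ (lexp (p :: t)) x‖₊ : ℝ≥0∞)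
        ≤ (‖(fderiv ℝ p.2 (lcomp (t.map Prod.fst) x)).comp
              (fderiv ℝ (lcomp (t.map Prod.fst)) x)‖₊ : ℝ≥0∞)
          + (‖fderiv ℝ (lexp t) x‖₊ : ℝ≥0∞) := by
          rw [hEq]; exact MuStarAux.eadd_le _ _
      _ ≤ a * (1 + a) ^ t.length + (t.length : ℝ≥0∞) * a * (1 + a) ^ (t.length - 1) := by
          refine add_le_add ?_ ih'
          calc (‖(fderiv ℝ p.2 (lcomp (t.map Prod.fst) x)).comp
                  (fderiv ℝ (lcomp (t.map Prod.fst)) x)‖₊ : ℝ≥0∞)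
              ≤ (‖fderiv ℝ p.2 (lcomp (t.map Prod.fst) x)‖₊ : ℝ≥0∞)
                * (‖fderiv ℝ (lcomp (t.map Prod.fst)) x‖₊ : ℝ≥0∞) := by
                exact MuStarAux.ecomp_le _ _
            _ ≤ a * (1 + a) ^ t.length := mul_le_mul' (hbl p (by simp) _) hDt
      _ ≤ ((p :: t).length : ℝ≥0∞) * a * (1 + a) ^ ((p :: t).length - 1) := by
          have h1' : (1 + a) ^ (t.length - 1) ≤ (1 + a) ^ t.length :=
            pow_le_pow_right' le_self_add (Nat.sub_le _ _)
          calc a * (1 + a) ^ t.length + (t.length : ℝ≥0∞) * a * (1 + a) ^ (t.length - 1)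
              ≤ a * (1 + a) ^ t.length + (t.length : ℝ≥0∞) * a * (1 + a) ^ t.length := by
                gcongr
            _ = ((t.length : ℝ≥0∞) + 1) * a * (1 + a) ^ t.length := by ring
            _ = ((p :: t).length : ℝ≥0∞) * a * (1 + a) ^ ((p :: t).length - 1) := by
                rw [List.length_cons, Nat.add_sub_cancel]
                push_cast
                ring

lemma supDeriv_one_eq {F : Type*} [NormedAddCommGroup F] [NormedSpace ℝ F]
    (u : E n → F) : supDeriv 1 u = ⨆ x : E n, (‖fderiv ℝ u x‖₊ : ℝ≥0∞) := by
  unfold supDeriv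
  congr 1
  funext x
  congr 1
  refine NNReal.coe_injective ?_
  rw [coe_nnnorm, coe_nnnorm, ← norm_iteratedFDeriv_fderiv, norm_iteratedFDeriv_zero]

end MuStarAux

/-- Basic `C¹` estimate for products of contactomorphisms: for compactly supported `C¹`
contactomorphisms `f₁, …, f_k` of `(ℝ^{2n+1}, α₀)` with `C¹` conformal exponents,
`μ₁*(f₁∘⋯∘f_k) ≤ k · μ₁*(𝐟) · ((1 + M₀*(𝐟))(1 + M₁*(𝐟)))^{k−1}`. -/
theorem muStar_one_of_product
    (n k : ℕ) (hk : 1 ≤ k)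
    (f : Fin k → E n → E n) (ℓ : Fin k → E n → ℝ)
    (hf : ∀ i, ContDiff ℝ 1 (f i)) (hℓ : ∀ i, ContDiff ℝ 1 (ℓ i))
    (hinv : ∀ i, ∃ g, Function.LeftInverse g (f i) ∧ Function.RightInverse g (f i) ∧
      ContDiff ℝ 1 g)
    (hc : ∀ i, IsContacto (f i) (ℓ i))
    (hsupp : ∀ i, ∃ K : Set (E n), IsCompact K ∧ ∀ x ∉ K, f i x = x)
    (L : E n → ℝ)
    (hL : IsContacto ((List.ofFn f).foldr (· ∘ ·) id) L) :
    muStar 1 ((List.ofFn f).foldr (· ∘ ·) id) L ≤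
      (k : ℝ≥0∞) * (Finset.univ.sup fun i => muStar 1 (f i) (ℓ i)) *
        ((1 + Finset.univ.sup fun i => muStar 0 (f i) (ℓ i)) *
          (1 + Finset.univ.sup fun i => MStar 1 (f i) (ℓ i))) ^ (k - 1) := by
  classical
  open MuStarAux in
  set A : ℝ≥0∞ := Finset.univ.sup fun i => muStar 1 (f i) (ℓ i) with hA
  set B0 : ℝ≥0∞ := Finset.univ.sup fun i => muStar 0 (f i) (ℓ i) with hB0
  set B1 : ℝ≥0∞ := Finset.univ.sup fun i => MStar 1 (f i) (ℓ i) with hB1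
  -- pointwise first-derivative bounds
  have hfb : ∀ (i : Fin k) (y : E n),
      (‖fderiv ℝ (f i) y - ContinuousLinearMap.id ℝ (E n)‖₊ : ℝ≥0∞) ≤ A := by
    intro i y
    have hder : fderiv ℝ (fun z => f i z - z) y =
        fderiv ℝ (f i) y - ContinuousLinearMap.id ℝ (E n) := by
      rw [fderiv_fun_sub ((hf i).differentiable one_ne_zero y) differentiableAt_fun_id, fderiv_id']
    calc (‖fderiv ℝ (f i) y - ContinuousLinearMap.id ℝ (E n)‖₊ : ℝ≥0∞)
        = (‖fderiv ℝ (fun z => f i z - z) y‖₊ : ℝ≥0∞) := by rw [hder]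
      _ ≤ supDeriv 1 (fun z => f i z - z) := by
          rw [MuStarAux.supDeriv_one_eq]
          exact le_iSup (fun x => (‖fderiv ℝ (fun z => f i z - z) x‖₊ : ℝ≥0∞)) y
      _ ≤ muStar 1 (f i) (ℓ i) := le_max_left _ _
      _ ≤ A := by rw [hA]; exact Finset.le_sup (f := fun j => muStar 1 (f j) (ℓ j)) (Finset.mem_univ i)
  have hlb : ∀ (i : Fin k) (y : E n), (‖fderiv ℝ (ℓ i) y‖₊ : ℝ≥0∞) ≤ A := by
    intro i y
    calc (‖fderiv ℝ (ℓ i) y‖₊ : ℝ≥0∞)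
        ≤ supDeriv 1 (ℓ i) := by
          rw [MuStarAux.supDeriv_one_eq]
          exact le_iSup (fun x => (‖fderiv ℝ (ℓ i) x‖₊ : ℝ≥0∞)) y
      _ ≤ muStar 1 (f i) (ℓ i) := le_max_right _ _
      _ ≤ A := by rw [hA]; exact Finset.le_sup (f := fun j => muStar 1 (f j) (ℓ j)) (Finset.mem_univ i)
  -- the list of pairs
  set ps : List ((E n → E n) × (E n → ℝ)) := List.ofFn (fun i => (f i, ℓ i)) with hps
  have hpmem : ∀ p ∈ ps, ∃ i : Fin k, (f i, ℓ i) = p := by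
    intro p hp
    exact List.mem_ofFn.1 hp
  have hmapfst : ps.map Prod.fst = List.ofFn f := by
    rw [hps, List.map_ofFn]
    rfl
  have hlen : ps.length = k := by rw [hps, List.length_ofFn]
  have hlenmap : (ps.map Prod.fst).length = k := by rw [List.length_map, hlen]
  have hcd1 : ∀ p ∈ ps, ContDiff ℝ 1 p.1 := by
    intro p hp; obtain ⟨i, rfl⟩ := hpmem p hp; exact hf i
  have hcd2 : ∀ p ∈ ps, ContDiff ℝ 1 p.2 := by
    intro p hp; obtain ⟨i, rfl⟩ := hpmem p hp; exact hℓ i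
  have hcmem : ∀ p ∈ ps, IsContacto p.1 p.2 := by
    intro p hp; obtain ⟨i, rfl⟩ := hpmem p hp; exact hc i
  have hbmem : ∀ p ∈ ps, ∀ y,
      (‖fderiv ℝ p.1 y - ContinuousLinearMap.id ℝ (E n)‖₊ : ℝ≥0∞) ≤ A := by
    intro p hp; obtain ⟨i, rfl⟩ := hpmem p hp; exact hfb i
  have hblmem : ∀ p ∈ ps, ∀ y, (‖fderiv ℝ p.2 y‖₊ : ℝ≥0∞) ≤ A := by
    intro p hp; obtain ⟨i, rfl⟩ := hpmem p hp; exact hlb i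
  have hcdmap : ∀ g ∈ ps.map Prod.fst, ContDiff ℝ 1 g := by
    intro g hg
    rcases List.mem_map.1 hg with ⟨q, hq, rfl⟩
    exact hcd1 q hq
  have hbmap : ∀ g ∈ ps.map Prod.fst, ∀ y,
      (‖fderiv ℝ g y - ContinuousLinearMap.id ℝ (E n)‖₊ : ℝ≥0∞) ≤ A := by
    intro g hg
    rcases List.mem_map.1 hg with ⟨q, hq, rfl⟩
    exact hbmem q hq
  -- identify the composition and the exponent
  have hFeq : MuStarAux.lcomp (ps.map Prod.fst) = (List.ofFn f).foldr (· ∘ ·) id := by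
    rw [hmapfst]; rfl
  have hFc : IsContacto (MuStarAux.lcomp (ps.map Prod.fst)) (MuStarAux.lexp ps) :=
    MuStarAux.isContacto_lcomp hcd1 hcmem
  have hL' : IsContacto (MuStarAux.lcomp (ps.map Prod.fst)) L := by rw [hFeq]; exact hL
  have hLeq : L = MuStarAux.lexp ps := MuStarAux.contacto_exp_unique hL' hFc
  -- the key intermediate bound
  have hkey : (k : ℝ≥0∞) * A * (1 + A) ^ (k - 1) ≤
      (k : ℝ≥0∞) * A * ((1 + B0) * (1 + B1)) ^ (k - 1) := by
    have hAB1 : A ≤ B1 := by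
      refine Finset.sup_mono_fun fun i _ => ?_
      exact Finset.le_sup (f := fun s => muStar s (f i) (ℓ i))
        (by simp : (1 : ℕ) ∈ Finset.range (1 + 1))
    have h1 : 1 + A ≤ (1 + B0) * (1 + B1) := by
      calc 1 + A ≤ 1 + B1 := by gcongr
        _ ≤ (1 + B0) * (1 + B1) := le_mul_of_one_le_left zero_le le_self_add
    exact mul_le_mul_right (pow_le_pow_left' h1 _) _
  rw [← hFeq, hLeq]
  refine le_trans (max_le ?_ ?_) hkey
  · -- derivative of the composition minus identity
    rw [MuStarAux.supDeriv_one_eq]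
    refine iSup_le fun x => ?_
    have hFdiff : Differentiable ℝ (MuStarAux.lcomp (ps.map Prod.fst)) :=
      (MuStarAux.lcomp_contDiff hcdmap).differentiable one_ne_zero
    have hder : fderiv ℝ (fun y => MuStarAux.lcomp (ps.map Prod.fst) y - y) x =
        fderiv ℝ (MuStarAux.lcomp (ps.map Prod.fst)) x - ContinuousLinearMap.id ℝ (E n) := by
      rw [fderiv_fun_sub (hFdiff x) differentiableAt_fun_id, fderiv_id']
    rw [hder]
    have := MuStarAux.fderiv_lcomp_sub_id_le hcdmap hbmap x
    rwa [hlenmap] at this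
  · -- derivative of the exponent
    rw [MuStarAux.supDeriv_one_eq]
    refine iSup_le fun x => ?_
    have := MuStarAux.fderiv_lexp_le hcd1 hcd2 hbmem hblmem x
    rwa [hlen] at this

end
end

section
/- Let δ ∈ (0,1) and let f be a compactly supported C¹ contactomorphism of (ℝ^{2n+1}, α₀) with C¹ conformal exponent ℓ_f, and suppose μ₀*(f) < δ and μ₁*(f) < δ. Then the inverse f⁻¹ is a contactomorphism (with conformal exponent ℓ_{f⁻¹} = −ℓ_f∘f⁻¹) and satisfies μ₁*(f⁻¹) ≤ μ₁*(f) / (1 − δ). -/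
open scoped BigOperators ENNReal
open Function Set

noncomputable section

/-- The norm of the first iterated derivative is the norm of the Fréchet derivative. -/
lemma norm_itf_one {n : ℕ} {F : Type*} [NormedAddCommGroup F] [NormedSpace ℝ F]
    (u : E n → F) (x : E n) : ‖iteratedFDeriv ℝ 1 u x‖ = ‖fderiv ℝ u x‖ := by
  rw [← norm_iteratedFDeriv_fderiv (n := 0), norm_iteratedFDeriv_zero]

/-- `C¹` estimate for the inverse of a contactomorphism: if `f` is a compactly supported `C¹`
contactomorphism of `(ℝ^{2n+1}, α₀)` with `C¹` conformal exponent `ℓ` and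
`μ₀*(f) < δ`, `μ₁*(f) < δ` for some `δ ∈ (0,1)`, then the inverse `fi` of `f` is a
contactomorphism with conformal exponent `−ℓ ∘ fi`, and `μ₁*(f⁻¹) ≤ μ₁*(f)/(1 − δ)`. -/
theorem muStar_one_of_inverse
    (n : ℕ) (δ : ℝ) (hδ0 : 0 < δ) (hδ1 : δ < 1)
    (f fi : E n → E n) (ℓ : E n → ℝ)
    (hf : ContDiff ℝ 1 f) (hℓ : ContDiff ℝ 1 ℓ) (hc : IsContacto f ℓ)
    (hfi : Function.LeftInverse fi f ∧ Function.RightInverse fi f ∧ ContDiff ℝ 1 fi)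
    (hsupp : ∃ K : Set (E n), IsCompact K ∧ ∀ x ∉ K, f x = x)
    (h0 : muStar 0 f ℓ < ENNReal.ofReal δ) (h1 : muStar 1 f ℓ < ENNReal.ofReal δ) :
    IsContacto fi (fun x => -ℓ (fi x)) ∧
    muStar 1 fi (fun x => -ℓ (fi x)) ≤ muStar 1 f ℓ / ENNReal.ofReal (1 - δ) := by
  obtain ⟨hl, hr, hfic⟩ := hfi
  have hfd : Differentiable ℝ f := hf.differentiable one_ne_zero
  have hfid : Differentiable ℝ fi := hfic.differentiable one_ne_zero
  have hℓd : Differentiable ℝ ℓ := hℓ.differentiable one_ne_zero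
  -- chain rule: Df(fi y) ∘ Dfi(y) = id
  have hT : ∀ y, (fderiv ℝ f (fi y)).comp (fderiv ℝ fi y) = ContinuousLinearMap.id ℝ (E n) := by
    intro y
    have h : f ∘ fi = id := funext hr
    have h2 := fderiv_comp y (hfd (fi y)) (hfid y)
    rw [h, fderiv_id] at h2
    exact h2.symm
  -- part 1 : fi is a contactomorphism
  have hcontacto : IsContacto fi (fun x => -ℓ (fi x)) := by
    intro y v
    have h2 : fderiv ℝ f (fi y) (fderiv ℝ fi y v) = v := by
      have := ContinuousLinearMap.ext_iff.mp (hT y) v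
      simpa using this
    have h1' := hc (fi y) (fderiv ℝ fi y v)
    rw [hr y, h2] at h1'
    rw [Real.exp_neg, h1', ← mul_assoc, inv_mul_cancel₀ (Real.exp_ne_zero _), one_mul]
  refine ⟨hcontacto, ?_⟩
  -- quantitative part
  set m := (muStar 1 f ℓ).toReal with hm
  have hfin : muStar 1 f ℓ ≠ ⊤ := h1.ne_top
  have hmδ : m < δ := ENNReal.toReal_lt_of_lt_ofReal h1
  have hm0 : 0 ≤ m := ENNReal.toReal_nonneg
  have h1δ : (0:ℝ) < 1 - δ := by linarith
  -- pointwise bounds from μ₁*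
  have hptw : ∀ (F : Type) [NormedAddCommGroup F] [NormedSpace ℝ F] (u : E n → F),
      supDeriv 1 u ≤ muStar 1 f ℓ → ∀ x, ‖fderiv ℝ u x‖ ≤ m := by
    intro F _ _ u hu x
    have h := (le_iSup (fun x => (‖iteratedFDeriv ℝ 1 u x‖₊ : ℝ≥0∞)) x).trans hu
    have h2 := ENNReal.toReal_mono hfin h
    rw [ENNReal.coe_toReal, coe_nnnorm, norm_itf_one] at h2
    exact h2
  have hA : ∀ x, ‖fderiv ℝ (fun y => f y - y) x‖ ≤ m :=
    hptw _ _ (le_max_left _ _)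
  have hL : ∀ x, ‖fderiv ℝ ℓ x‖ ≤ m := hptw _ _ (le_max_right _ _)
  have hAdef : ∀ x, fderiv ℝ (fun y => f y - y) x
      = fderiv ℝ f x - ContinuousLinearMap.id ℝ (E n) := by
    intro x
    rw [fderiv_fun_sub (hfd x) differentiableAt_fun_id, fderiv_id']
  -- key identity : B = id - A ∘ B
  have hkey : ∀ y, fderiv ℝ fi y = ContinuousLinearMap.id ℝ (E n)
      - (fderiv ℝ (fun z => f z - z) (fi y)).comp (fderiv ℝ fi y) := by
    intro y
    rw [hAdef, ContinuousLinearMap.sub_comp, hT y, ContinuousLinearMap.id_comp,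
      sub_sub_cancel]
  have hB : ∀ y, ‖fderiv ℝ fi y‖ ≤ 1 / (1 - δ) := by
    intro y
    have h2 : ‖fderiv ℝ fi y‖ ≤ 1 + m * ‖fderiv ℝ fi y‖ := by
      calc ‖fderiv ℝ fi y‖ = ‖ContinuousLinearMap.id ℝ (E n)
            - (fderiv ℝ (fun z => f z - z) (fi y)).comp (fderiv ℝ fi y)‖ := by
            rw [← hkey y]
        _ ≤ ‖ContinuousLinearMap.id ℝ (E n)‖
            + ‖(fderiv ℝ (fun z => f z - z) (fi y)).comp (fderiv ℝ fi y)‖ :=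
            norm_sub_le _ _
        _ ≤ 1 + m * ‖fderiv ℝ fi y‖ := by
            gcongr
            · exact ContinuousLinearMap.norm_id_le
            · exact (ContinuousLinearMap.opNorm_comp_le _ _).trans
                (mul_le_mul_of_nonneg_right (hA _) (norm_nonneg _))
    rw [le_div_iff₀ h1δ]
    nlinarith [norm_nonneg (fderiv ℝ fi y),
      mul_le_mul_of_nonneg_left hmδ.le (norm_nonneg (fderiv ℝ fi y))]
  have hBmI : ∀ y, ‖fderiv ℝ (fun z => fi z - z) y‖ ≤ m / (1 - δ) := by
    intro y
    have hd : fderiv ℝ (fun z => fi z - z) y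
        = -((fderiv ℝ (fun z => f z - z) (fi y)).comp (fderiv ℝ fi y)) := by
      rw [fderiv_fun_sub (hfid y) differentiableAt_fun_id, fderiv_id']
      nth_rewrite 1 [hkey y]
      rw [sub_sub_cancel_left]
    rw [hd, norm_neg]
    calc ‖(fderiv ℝ (fun z => f z - z) (fi y)).comp (fderiv ℝ fi y)‖
        ≤ ‖fderiv ℝ (fun z => f z - z) (fi y)‖ * ‖fderiv ℝ fi y‖ :=
          ContinuousLinearMap.opNorm_comp_le _ _
      _ ≤ m * (1 / (1 - δ)) := by
          apply mul_le_mul (hA _) (hB _) (norm_nonneg _) hm0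
      _ = m / (1 - δ) := by ring
  have hgL : ∀ y, ‖fderiv ℝ (fun x => -ℓ (fi x)) y‖ ≤ m / (1 - δ) := by
    intro y
    have hd : fderiv ℝ (fun x => -ℓ (fi x)) y
        = -((fderiv ℝ ℓ (fi y)).comp (fderiv ℝ fi y)) := by
      rw [fderiv_fun_neg]
      congr 1
      exact fderiv_comp y (hℓd (fi y)) (hfid y)
    rw [hd, norm_neg]
    calc ‖(fderiv ℝ ℓ (fi y)).comp (fderiv ℝ fi y)‖
        ≤ ‖fderiv ℝ ℓ (fi y)‖ * ‖fderiv ℝ fi y‖ := ContinuousLinearMap.opNorm_comp_le _ _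
      _ ≤ m * (1 / (1 - δ)) := mul_le_mul (hL _) (hB _) (norm_nonneg _) hm0
      _ = m / (1 - δ) := by ring
  have hbound : muStar 1 fi (fun x => -ℓ (fi x)) ≤ ENNReal.ofReal (m / (1 - δ)) := by
    apply max_le
    · apply iSup_le; intro x
      rw [← ENNReal.ofReal_coe_nnreal, coe_nnnorm, norm_itf_one]
      exact ENNReal.ofReal_le_ofReal (hBmI x)
    · apply iSup_le; intro x
      rw [← ENNReal.ofReal_coe_nnreal, coe_nnnorm, norm_itf_one]
      exact ENNReal.ofReal_le_ofReal (hgL x)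
  calc muStar 1 fi (fun x => -ℓ (fi x)) ≤ ENNReal.ofReal (m / (1 - δ)) := hbound
    _ = ENNReal.ofReal m / ENNReal.ofReal (1 - δ) := ENNReal.ofReal_div_of_pos h1δ
    _ = muStar 1 f ℓ / ENNReal.ofReal (1 - δ) := by rw [ENNReal.ofReal_toReal hfin]

end
end

section
/- Let n ≥ 1, and for A ≥ 1 and 𝐭 = (t_1,…,t_n) ∈ ℝⁿ define ρ_{A,𝐭} : ℝ^{2n+1} → ℝ^{2n+1} by ρ_{A,𝐭}(z, q, p) := (A⁴z + A² Σᵢ tᵢqᵢ, A²q, A²p + 𝐭). For every integer r ≥ 1 there exists a constant C = C(n, r) > 0 such that for all A ≥ 1, all 𝐭 with |t_i| ≤ 2A for each i, and every compactly supported C^r contactomorphism g of (ℝ^{2n+1}, α₀) with C^r conformal exponent ℓ_g, the conjugation ρ_{A,𝐭} ∘ g ∘ ρ_{A,𝐭}⁻¹ is a compactly supported contactomorphism of α₀ with conformal exponent ℓ_g ∘ ρ_{A,𝐭}⁻¹, and it satisfies the scaling estimate μ_r*(ρ_{A,𝐭} ∘ g ∘ ρ_{A,𝐭}⁻¹) ≤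 C · A^{4−2r} · μ_r*(g). -/
open scoped BigOperators ENNReal
open Function Set

noncomputable section

/-- The contact scaling preceded by twisted `p`-translations:
`ρ_{A,𝐭}(z,q,p) = (A⁴z + A² Σᵢ tᵢqᵢ, A²q, A²p + 𝐭)`. -/
def rhoMap (n : ℕ) (A : ℝ) (t : Fin n → ℝ) (x : E n) : E n :=
  (A ^ 4 * x.1 + A ^ 2 * ∑ i, t i * x.2.1 i,
   fun i => A ^ 2 * x.2.1 i,
   fun i => A ^ 2 * x.2.2 i + t i)

/-- The inverse of `ρ_{A,𝐭}`:
`ρ_{A,𝐭}⁻¹(z,q,p) = ((z − Σᵢ tᵢqᵢ)/A⁴, q/A², (p − 𝐭)/A²)`. -/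
def rhoInv (n : ℕ) (A : ℝ) (t : Fin n → ℝ) (x : E n) : E n :=
  ((x.1 - ∑ i, t i * x.2.1 i) / A ^ 4,
   fun i => x.2.1 i / A ^ 2,
   fun i => (x.2.2 i - t i) / A ^ 2)

section Shift

variable {Ee F : Type*} [NormedAddCommGroup Ee] [NormedSpace ℝ Ee]
  [NormedAddCommGroup F] [NormedSpace ℝ F]

lemma fderiv_shift (u : Ee → F) (d x : Ee) :
    fderiv ℝ (fun y => u (y + d)) x = fderiv ℝ u (x + d) := by
  by_cases h : DifferentiableAt ℝ u (x + d)
  · have h2 : DifferentiableAt ℝ (fun y : Ee => y + d) x :=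
      (differentiable_id.add_const d) x
    have := fderiv_comp x h h2
    simp only [Function.comp_def] at this
    rw [this]
    have : fderiv ℝ (fun y : Ee => y + d) x = ContinuousLinearMap.id ℝ Ee := by
      rw [fderiv_add_const]; exact fderiv_id
    rw [this, ContinuousLinearMap.comp_id]
  · rw [fderiv_zero_of_not_differentiableAt h, fderiv_zero_of_not_differentiableAt]
    intro hcon
    apply h
    have heq : u = (fun z => (fun y => u (y + d)) (z - d)) := by
      funext z; simp
    rw [heq]
    have h3 : DifferentiableAt ℝ (fun z : Ee => z - d) (x + d) :=
      (differentiable_id.sub_const d) (x + d)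
    have := DifferentiableAt.comp (x + d) (by simpa using hcon) h3
    simpa [Function.comp_def] using this

lemma iteratedFDeriv_shift (u : Ee → F) (d : Ee) (r : ℕ) (x : Ee) :
    iteratedFDeriv ℝ r (fun y => u (y + d)) x = iteratedFDeriv ℝ r u (x + d) := by
  induction r generalizing x with
  | zero => ext m; simp
  | succ k ih =>
    rw [iteratedFDeriv_succ_eq_comp_left, iteratedFDeriv_succ_eq_comp_left]
    simp only [Function.comp_apply]
    congr 1
    have hfun : iteratedFDeriv ℝ k (fun y => u (y + d)) =
        fun y => iteratedFDeriv ℝ k u (y + d) := funext fun y => ih y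
    rw [hfun, fderiv_shift]

end Shift


def Llin (n : ℕ) (A : ℝ) (t : Fin n → ℝ) : E n →ₗ[ℝ] E n where
  toFun x := (A ^ 4 * x.1 + A ^ 2 * ∑ i, t i * x.2.1 i,
    fun i => A ^ 2 * x.2.1 i, fun i => A ^ 2 * x.2.2 i)
  map_add' x y := by
    simp only [Prod.fst_add, Prod.snd_add, Pi.add_apply, Prod.mk_add_mk, Prod.mk.injEq]
    refine ⟨?_, funext fun i => by simp only [Pi.add_apply, Pi.smul_apply, smul_eq_mul]; ring, funext fun i => by simp only [Pi.add_apply, Pi.smul_apply, smul_eq_mul]; ring⟩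
    rw [show (∑ i, t i * (x.2.1 i + y.2.1 i)) = (∑ i, t i * x.2.1 i) + ∑ i, t i * y.2.1 i by
      rw [← Finset.sum_add_distrib]; exact Finset.sum_congr rfl fun i _ => by ring]
    ring
  map_smul' c x := by
    simp only [Prod.smul_fst, Prod.smul_snd, Pi.smul_apply, smul_eq_mul, RingHom.id_apply,
      Prod.smul_mk, Prod.mk.injEq]
    refine ⟨?_, funext fun i => by simp only [Pi.add_apply, Pi.smul_apply, smul_eq_mul]; ring, funext fun i => by simp only [Pi.add_apply, Pi.smul_apply, smul_eq_mul]; ring⟩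
    rw [show (∑ i, t i * (c * x.2.1 i)) = c * ∑ i, t i * x.2.1 i by
      rw [Finset.mul_sum]; exact Finset.sum_congr rfl fun i _ => by ring]
    ring

def Linvlin (n : ℕ) (A : ℝ) (t : Fin n → ℝ) : E n →ₗ[ℝ] E n where
  toFun x := ((x.1 - ∑ i, t i * x.2.1 i) / A ^ 4,
    fun i => x.2.1 i / A ^ 2, fun i => x.2.2 i / A ^ 2)
  map_add' x y := by
    simp only [Prod.fst_add, Prod.snd_add, Pi.add_apply, Prod.mk_add_mk, Prod.mk.injEq]
    refine ⟨?_, funext fun i => by simp only [Pi.add_apply, Pi.smul_apply, smul_eq_mul]; ring, funext fun i => by simp only [Pi.add_apply, Pi.smul_apply, smul_eq_mul]; ring⟩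
    rw [show (∑ i, t i * (x.2.1 i + y.2.1 i)) = (∑ i, t i * x.2.1 i) + ∑ i, t i * y.2.1 i by
      rw [← Finset.sum_add_distrib]; exact Finset.sum_congr rfl fun i _ => by ring]
    ring
  map_smul' c x := by
    simp only [Prod.smul_fst, Prod.smul_snd, Pi.smul_apply, smul_eq_mul, RingHom.id_apply,
      Prod.smul_mk, Prod.mk.injEq]
    refine ⟨?_, funext fun i => by simp only [Pi.add_apply, Pi.smul_apply, smul_eq_mul]; ring, funext fun i => by simp only [Pi.add_apply, Pi.smul_apply, smul_eq_mul]; ring⟩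
    rw [show (∑ i, t i * (c * x.2.1 i)) = c * ∑ i, t i * x.2.1 i by
      rw [Finset.mul_sum]; exact Finset.sum_congr rfl fun i _ => by ring]
    ring

def Lmap (n : ℕ) (A : ℝ) (t : Fin n → ℝ) : E n →L[ℝ] E n :=
  LinearMap.toContinuousLinearMap (Llin n A t)

def Linvmap (n : ℕ) (A : ℝ) (t : Fin n → ℝ) : E n →L[ℝ] E n :=
  LinearMap.toContinuousLinearMap (Linvlin n A t)

lemma Lmap_apply (n : ℕ) (A : ℝ) (t : Fin n → ℝ) (x : E n) :
    Lmap n A t x = (A ^ 4 * x.1 + A ^ 2 * ∑ i, t i * x.2.1 i,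
      fun i => A ^ 2 * x.2.1 i, fun i => A ^ 2 * x.2.2 i) := rfl

lemma Linvmap_apply (n : ℕ) (A : ℝ) (t : Fin n → ℝ) (x : E n) :
    Linvmap n A t x = ((x.1 - ∑ i, t i * x.2.1 i) / A ^ 4,
      fun i => x.2.1 i / A ^ 2, fun i => x.2.2 i / A ^ 2) := rfl

lemma rhoMap_eq (n : ℕ) (A : ℝ) (t : Fin n → ℝ) (x : E n) :
    rhoMap n A t x = Lmap n A t x + ((0 : ℝ), (0 : Fin n → ℝ), t) := by
  simp only [rhoMap, Lmap_apply, Prod.mk_add_mk, Prod.mk.injEq]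
  refine ⟨by ring, by funext i; simp, by funext i; simp [Pi.add_apply]⟩

lemma rhoInv_eq (n : ℕ) (A : ℝ) (t : Fin n → ℝ) (x : E n) :
    rhoInv n A t x = Linvmap n A t x + ((0 : ℝ), (0 : Fin n → ℝ), fun i => -(t i) / A ^ 2) := by
  simp only [rhoInv, Linvmap_apply, Prod.mk_add_mk, Prod.mk.injEq]
  refine ⟨by ring, by funext i; simp, by funext i; simp [Pi.add_apply]; ring⟩

lemma rhoMap_rhoInv (n : ℕ) (A : ℝ) (hA : A ≠ 0) (t : Fin n → ℝ) (x : E n) :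
    rhoMap n A t (rhoInv n A t x) = x := by
  have hA4 : A ^ 4 ≠ 0 := pow_ne_zero _ hA
  have hA2 : A ^ 2 ≠ 0 := pow_ne_zero _ hA
  simp only [rhoMap, rhoInv]
  have hs : (∑ i, t i * (x.2.1 i / A ^ 2)) = (∑ i, t i * x.2.1 i) / A ^ 2 := by
    rw [Finset.sum_div]; exact Finset.sum_congr rfl fun i _ => by ring
  refine Prod.ext ?_ (Prod.ext ?_ ?_)
  · simp only [hs]; field_simp; ring
  · funext i; field_simp
  · funext i; field_simp; ring

lemma rhoInv_rhoMap (n : ℕ) (A : ℝ) (hA : A ≠ 0) (t : Fin n → ℝ) (x : E n) :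
    rhoInv n A t (rhoMap n A t x) = x := by
  have hA4 : A ^ 4 ≠ 0 := pow_ne_zero _ hA
  have hA2 : A ^ 2 ≠ 0 := pow_ne_zero _ hA
  simp only [rhoMap, rhoInv]
  have hs : (∑ i, t i * (A ^ 2 * x.2.1 i)) = A ^ 2 * ∑ i, t i * x.2.1 i := by
    rw [Finset.mul_sum]; exact Finset.sum_congr rfl fun i _ => by ring
  refine Prod.ext ?_ (Prod.ext ?_ ?_)
  · simp only [hs]; field_simp; ring
  · funext i; field_simp
  · funext i; field_simp; ring

lemma Lmap_Linvmap (n : ℕ) (A : ℝ) (hA : A ≠ 0) (t : Fin n → ℝ) (x : E n) :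
    Lmap n A t (Linvmap n A t x) = x := by
  have hA4 : A ^ 4 ≠ 0 := pow_ne_zero _ hA
  have hA2 : A ^ 2 ≠ 0 := pow_ne_zero _ hA
  simp only [Lmap_apply, Linvmap_apply]
  have hs : (∑ i, t i * (x.2.1 i / A ^ 2)) = (∑ i, t i * x.2.1 i) / A ^ 2 := by
    rw [Finset.sum_div]; exact Finset.sum_congr rfl fun i _ => by ring
  refine Prod.ext ?_ (Prod.ext ?_ ?_)
  · simp only [hs]; field_simp; ring
  · funext i; field_simp
  · funext i; field_simp

lemma comp_norm_bounds (n : ℕ) (A : ℝ) (hA : 1 ≤ A) (t : Fin n → ℝ)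
    (ht : ∀ i, |t i| ≤ 2 * A) (x : E n) :
    |∑ i, t i * x.2.1 i| ≤ 2 * A * n * ‖x‖ := by
  have hq : ∀ i, |x.2.1 i| ≤ ‖x‖ := fun i =>
    (norm_le_pi_norm x.2.1 i).trans ((norm_fst_le x.2).trans (norm_snd_le x))
  calc |∑ i, t i * x.2.1 i| ≤ ∑ i, |t i * x.2.1 i| := Finset.abs_sum_le_sum_abs _ _
    _ ≤ ∑ _i : Fin n, 2 * A * ‖x‖ := by
        refine Finset.sum_le_sum fun i _ => ?_
        rw [abs_mul]
        exact mul_le_mul (ht i) (hq i) (abs_nonneg _) (by positivity)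
    _ = 2 * A * n * ‖x‖ := by
        rw [Finset.sum_const, Finset.card_univ, Fintype.card_fin, nsmul_eq_mul]; ring

lemma Lmap_norm_le (n : ℕ) (A : ℝ) (hA : 1 ≤ A) (t : Fin n → ℝ)
    (ht : ∀ i, |t i| ≤ 2 * A) :
    ‖Lmap n A t‖ ≤ (1 + 2 * n) * A ^ 4 := by
  have hA0 : (0:ℝ) < A := lt_of_lt_of_le one_pos hA
  refine ContinuousLinearMap.opNorm_le_bound _ (by positivity) fun x => ?_
  have hz : |x.1| ≤ ‖x‖ := norm_fst_le x
  have hq : ∀ i, |x.2.1 i| ≤ ‖x‖ := fun i =>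
    (norm_le_pi_norm x.2.1 i).trans ((norm_fst_le x.2).trans (norm_snd_le x))
  have hp : ∀ i, |x.2.2 i| ≤ ‖x‖ := fun i =>
    (norm_le_pi_norm x.2.2 i).trans ((norm_snd_le x.2).trans (norm_snd_le x))
  have hx0 : (0:ℝ) ≤ ‖x‖ := norm_nonneg x
  have hA3 : A ^ 3 ≤ A ^ 4 := pow_le_pow_right₀ hA (by norm_num)
  have hA24 : A ^ 2 ≤ A ^ 4 := pow_le_pow_right₀ hA (by norm_num)
  have hS := comp_norm_bounds n A hA t ht x
  rw [Lmap_apply, Prod.norm_def, Prod.norm_def]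
  refine max_le ?_ (max_le ?_ ?_)
  · have habs : |A ^ 4 * x.1 + A ^ 2 * ∑ i, t i * x.2.1 i| ≤
        A ^ 4 * |x.1| + A ^ 2 * |∑ i, t i * x.2.1 i| := by
      calc _ ≤ |A ^ 4 * x.1| + |A ^ 2 * ∑ i, t i * x.2.1 i| := abs_add_le _ _
        _ = A ^ 4 * |x.1| + A ^ 2 * |∑ i, t i * x.2.1 i| := by
            rw [abs_mul, abs_mul, abs_of_pos (show (0:ℝ) < A ^ 4 by positivity),
              abs_of_pos (show (0:ℝ) < A ^ 2 by positivity)]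
    simp only [Real.norm_eq_abs]
    nlinarith [mul_le_mul_of_nonneg_left hS (le_of_lt (show (0:ℝ) < A ^ 2 by positivity)),
      mul_le_mul_of_nonneg_left hz (le_of_lt (show (0:ℝ) < A ^ 4 by positivity)),
      mul_le_mul_of_nonneg_right hA3 (by positivity : (0:ℝ) ≤ 2 * n * ‖x‖)]
  · refine pi_norm_le_iff_of_nonneg (by positivity) |>.2 fun i => ?_
    simp only [Real.norm_eq_abs, abs_mul, abs_of_pos (show (0:ℝ) < A ^ 2 by positivity)]
    have key : A ^ 2 * |x.2.1 i| ≤ A ^ 4 * ‖x‖ :=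
      mul_le_mul hA24 (hq i) (abs_nonneg _) (by positivity)
    nlinarith [mul_nonneg (Nat.cast_nonneg (α := ℝ) n)
      (mul_nonneg (le_of_lt (show (0:ℝ) < A ^ 4 by positivity)) hx0)]
  · refine pi_norm_le_iff_of_nonneg (by positivity) |>.2 fun i => ?_
    simp only [Real.norm_eq_abs, abs_mul, abs_of_pos (show (0:ℝ) < A ^ 2 by positivity)]
    have key : A ^ 2 * |x.2.2 i| ≤ A ^ 4 * ‖x‖ :=
      mul_le_mul hA24 (hp i) (abs_nonneg _) (by positivity)
    nlinarith [mul_nonneg (Nat.cast_nonneg (α := ℝ) n)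
      (mul_nonneg (le_of_lt (show (0:ℝ) < A ^ 4 by positivity)) hx0)]

lemma Linvmap_norm_le (n : ℕ) (A : ℝ) (hA : 1 ≤ A) (t : Fin n → ℝ)
    (ht : ∀ i, |t i| ≤ 2 * A) :
    ‖Linvmap n A t‖ ≤ (1 + 2 * n) / A ^ 2 := by
  have hA0 : (0:ℝ) < A := lt_of_lt_of_le one_pos hA
  have hA2 : (0:ℝ) < A ^ 2 := by positivity
  have hA4 : (0:ℝ) < A ^ 4 := by positivity
  refine ContinuousLinearMap.opNorm_le_bound _ (by positivity) fun x => ?_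
  have hz : |x.1| ≤ ‖x‖ := norm_fst_le x
  have hq : ∀ i, |x.2.1 i| ≤ ‖x‖ := fun i =>
    (norm_le_pi_norm x.2.1 i).trans ((norm_fst_le x.2).trans (norm_snd_le x))
  have hp : ∀ i, |x.2.2 i| ≤ ‖x‖ := fun i =>
    (norm_le_pi_norm x.2.2 i).trans ((norm_snd_le x.2).trans (norm_snd_le x))
  have hx0 : (0:ℝ) ≤ ‖x‖ := norm_nonneg x
  have hS := comp_norm_bounds n A hA t ht x
  rw [Linvmap_apply, Prod.norm_def, Prod.norm_def]
  refine max_le ?_ (max_le ?_ ?_)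
  · simp only [Real.norm_eq_abs, abs_div, abs_of_pos hA4]
    rw [div_le_iff₀ hA4]
    have heq : (1 + 2 * (n:ℝ)) / A ^ 2 * ‖x‖ * A ^ 4 = (1 + 2 * n) * A ^ 2 * ‖x‖ := by
      field_simp
    rw [heq]
    have h1 : |x.1 - ∑ i, t i * x.2.1 i| ≤ ‖x‖ + 2 * A * n * ‖x‖ :=
      (abs_sub _ _).trans (by linarith)
    have h2 : A ≤ A ^ 2 := by nlinarith
    have h3 : (1:ℝ) ≤ A ^ 2 := by nlinarith
    nlinarith [mul_le_mul_of_nonneg_right h2 (by positivity : (0:ℝ) ≤ 2 * n * ‖x‖),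
      mul_le_mul_of_nonneg_right h3 hx0]
  · refine pi_norm_le_iff_of_nonneg (by positivity) |>.2 fun i => ?_
    simp only [Real.norm_eq_abs, abs_div, abs_of_pos hA2]
    rw [div_le_iff₀ hA2]
    have heq : (1 + 2 * (n:ℝ)) / A ^ 2 * ‖x‖ * A ^ 2 = (1 + 2 * n) * ‖x‖ := by
      field_simp
    rw [heq]
    nlinarith [hq i, mul_nonneg (Nat.cast_nonneg (α := ℝ) n) hx0]
  · refine pi_norm_le_iff_of_nonneg (by positivity) |>.2 fun i => ?_
    simp only [Real.norm_eq_abs, abs_div, abs_of_pos hA2]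
    rw [div_le_iff₀ hA2]
    have heq : (1 + 2 * (n:ℝ)) / A ^ 2 * ‖x‖ * A ^ 2 = (1 + 2 * n) * ‖x‖ := by
      field_simp
    rw [heq]
    nlinarith [hp i, mul_nonneg (Nat.cast_nonneg (α := ℝ) n) hx0]

lemma alpha0_rho (n : ℕ) (A : ℝ) (t : Fin n → ℝ) (y v : E n) :
    alpha0 (rhoMap n A t y) (Lmap n A t v) = A ^ 4 * alpha0 y v := by
  simp only [alpha0, rhoMap, Lmap_apply]
  have hs : (∑ i, (A ^ 2 * y.2.2 i + t i) * (A ^ 2 * v.2.1 i)) =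
      A ^ 4 * (∑ i, y.2.2 i * v.2.1 i) + A ^ 2 * ∑ i, t i * v.2.1 i := by
    rw [Finset.mul_sum, Finset.mul_sum, ← Finset.sum_add_distrib]
    exact Finset.sum_congr rfl fun i _ => by ring
  rw [hs]; ring

lemma continuous_rhoMap (n : ℕ) (A : ℝ) (t : Fin n → ℝ) : Continuous (rhoMap n A t) := by
  have : rhoMap n A t = fun x => Lmap n A t x + ((0 : ℝ), (0 : Fin n → ℝ), t) :=
    funext (rhoMap_eq n A t)
  rw [this]
  exact (Lmap n A t).continuous.add continuous_const

lemma fderiv_rhoMap (n : ℕ) (A : ℝ) (t : Fin n → ℝ) (x : E n) :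
    fderiv ℝ (rhoMap n A t) x = Lmap n A t := by
  have : rhoMap n A t = fun x => Lmap n A t x + ((0 : ℝ), (0 : Fin n → ℝ), t) :=
    funext (rhoMap_eq n A t)
  rw [this, fderiv_add_const]
  exact (Lmap n A t).fderiv

lemma fderiv_rhoInv (n : ℕ) (A : ℝ) (t : Fin n → ℝ) (x : E n) :
    fderiv ℝ (rhoInv n A t) x = Linvmap n A t := by
  have : rhoInv n A t = fun x =>
      Linvmap n A t x + ((0 : ℝ), (0 : Fin n → ℝ), fun i => -(t i) / A ^ 2) :=
    funext (rhoInv_eq n A t)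
  rw [this, fderiv_add_const]
  exact (Linvmap n A t).fderiv

lemma differentiable_rhoMap (n : ℕ) (A : ℝ) (t : Fin n → ℝ) :
    Differentiable ℝ (rhoMap n A t) := by
  have : rhoMap n A t = fun x => Lmap n A t x + ((0 : ℝ), (0 : Fin n → ℝ), t) :=
    funext (rhoMap_eq n A t)
  rw [this]
  exact (Lmap n A t).differentiable.add_const _

lemma differentiable_rhoInv (n : ℕ) (A : ℝ) (t : Fin n → ℝ) :
    Differentiable ℝ (rhoInv n A t) := by
  have : rhoInv n A t = fun x =>
      Linvmap n A t x + ((0 : ℝ), (0 : Fin n → ℝ), fun i => -(t i) / A ^ 2) :=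
    funext (rhoInv_eq n A t)
  rw [this]
  exact (Linvmap n A t).differentiable.add_const _

/-- The optimal scaling estimate (threshold-determining power `A^{4−2r}`): for every `r ≥ 1`
there is `C = C(n,r) > 0` such that for all `A ≥ 1`, all `𝐭` with `|tᵢ| ≤ 2A`, and every
compactly supported `C^r` contactomorphism `g` of `(ℝ^{2n+1}, α₀)` with `C^r` conformal
exponent `ℓ`, the conjugation `ρ_{A,𝐭} ∘ g ∘ ρ_{A,𝐭}⁻¹` is a compactly supported
contactomorphism with conformal exponent `ℓ ∘ ρ_{A,𝐭}⁻¹` and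
`μ_r*(ρ_{A,𝐭} ∘ g ∘ ρ_{A,𝐭}⁻¹) ≤ C · A^{4−2r} · μ_r*(g)`. -/
theorem scaling_estimate
    (n r : ℕ) (hn : 1 ≤ n) (hr : 1 ≤ r) :
    ∃ C : ℝ, 0 < C ∧
      ∀ (A : ℝ), 1 ≤ A → ∀ (t : Fin n → ℝ), (∀ i, |t i| ≤ 2 * A) →
        ∀ (g : E n → E n) (ℓ : E n → ℝ),
          ContDiff ℝ r g → ContDiff ℝ r ℓ → IsContacto g ℓ →
          (∃ gi, Function.LeftInverse gi g ∧ Function.RightInverse gi g ∧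
            ContDiff ℝ r gi) →
          (∃ K : Set (E n), IsCompact K ∧ ∀ x ∉ K, g x = x) →
          (∃ K : Set (E n), IsCompact K ∧
            ∀ x ∉ K, (rhoMap n A t ∘ g ∘ rhoInv n A t) x = x) ∧
          IsContacto (rhoMap n A t ∘ g ∘ rhoInv n A t) (fun x => ℓ (rhoInv n A t x)) ∧
          muStar r (rhoMap n A t ∘ g ∘ rhoInv n A t) (fun x => ℓ (rhoInv n A t x)) ≤
            ENNReal.ofReal (C * A ^ ((4 : ℤ) - 2 * (r : ℤ))) * muStar r g ℓ := by
  have hn0 : (0:ℝ) ≤ 2 * n := by positivity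
  refine ⟨(1 + 2 * (n:ℝ)) ^ (r + 1), by positivity, ?_⟩
  intro A hA t ht g ℓ hg hℓ hcont _hinv hsupp
  obtain ⟨K, hK, hgK⟩ := hsupp
  have hA0 : (0:ℝ) < A := lt_of_lt_of_le one_pos hA
  have hAne : A ≠ 0 := ne_of_gt hA0
  set B : ℝ := 1 + 2 * (n:ℝ) with hBdef
  have hB : (1:ℝ) ≤ B := by rw [hBdef]; linarith
  set d : E n := ((0 : ℝ), (0 : Fin n → ℝ), fun i => -(t i) / A ^ 2) with hd
  have hrinv : ∀ x, rhoInv n A t x = Linvmap n A t x + d := rhoInv_eq n A t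
  set c : ℝ := B ^ (r + 1) * A ^ ((4:ℤ) - 2 * (r:ℤ)) with hcdef
  have hzpos : (0:ℝ) < A ^ ((4:ℤ) - 2 * (r:ℤ)) := zpow_pos hA0 _
  have hc0 : 0 ≤ c := by
    rw [hcdef]; exact mul_nonneg (by positivity) (le_of_lt hzpos)
  have hcA : (B * A ^ 4) * (B / A ^ 2) ^ r = c := by
    have h1 : A ^ ((4:ℤ) - 2 * (r:ℤ)) = A ^ (4:ℕ) / A ^ (2 * r) := by
      rw [zpow_sub₀ hAne]
      have h2 : (2 * (r:ℤ)) = ((2 * r : ℕ) : ℤ) := by push_cast; ring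
      rw [h2, zpow_natCast, show ((4:ℤ) = ((4:ℕ):ℤ)) by norm_num, zpow_natCast]
    rw [hcdef, h1, div_pow, ← pow_mul]
    have hA2r : A ^ (2 * r) ≠ 0 := pow_ne_zero _ hAne
    field_simp
    ring
  refine ⟨?_, ?_, ?_⟩
  · -- compact support
    refine ⟨rhoMap n A t '' K, hK.image (continuous_rhoMap n A t), fun x hx => ?_⟩
    have hxK : rhoInv n A t x ∉ K := fun h => hx ⟨rhoInv n A t x, h, rhoMap_rhoInv n A hAne t x⟩
    simp only [Function.comp_apply, hgK _ hxK, rhoMap_rhoInv n A hAne t x]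
  · -- contactomorphism
    intro x v
    have h1le : (1 : WithTop ℕ∞) ≤ (r : ℕ) := by exact_mod_cast hr
    have hdg : DifferentiableAt ℝ g (rhoInv n A t x) := (hg.differentiable (lt_of_lt_of_le zero_lt_one h1le).ne') _
    have hdF : fderiv ℝ (rhoMap n A t ∘ g ∘ rhoInv n A t) x v =
        Lmap n A t (fderiv ℝ g (rhoInv n A t x) (Linvmap n A t v)) := by
      have h2 : fderiv ℝ (g ∘ rhoInv n A t) x =
          (fderiv ℝ g (rhoInv n A t x)).comp (Linvmap n A t) := by
        rw [fderiv_comp x hdg (differentiable_rhoInv n A t x), fderiv_rhoInv]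
      have h1 : fderiv ℝ (rhoMap n A t ∘ g ∘ rhoInv n A t) x =
          (fderiv ℝ (rhoMap n A t) ((g ∘ rhoInv n A t) x)).comp
            (fderiv ℝ (g ∘ rhoInv n A t) x) :=
        fderiv_comp x (differentiable_rhoMap n A t _)
          (hdg.comp x (differentiable_rhoInv n A t x))
      rw [h1, h2, fderiv_rhoMap]
      rfl
    have hkey : alpha0 x v = A ^ 4 * alpha0 (rhoInv n A t x) (Linvmap n A t v) := by
      conv_lhs => rw [show x = rhoMap n A t (rhoInv n A t x) from
        (rhoMap_rhoInv n A hAne t x).symm, show v = Lmap n A t (Linvmap n A t v) from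
        (Lmap_Linvmap n A hAne t v).symm]
      exact alpha0_rho n A t _ _
    have : alpha0 ((rhoMap n A t ∘ g ∘ rhoInv n A t) x)
        (fderiv ℝ (rhoMap n A t ∘ g ∘ rhoInv n A t) x v) =
        A ^ 4 * alpha0 (g (rhoInv n A t x)) (fderiv ℝ g (rhoInv n A t x) (Linvmap n A t v)) := by
      rw [hdF]
      exact alpha0_rho n A t _ _
    rw [this, hcont (rhoInv n A t x) (Linvmap n A t v), hkey]
    ring
  · -- the estimate
    set w : E n → E n := fun y => g y - y with hwdef
    have hw : ContDiff ℝ r w := hg.sub contDiff_id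
    have hwt : ContDiff ℝ r (fun y => w (y + d)) := hw.comp (contDiff_id.add contDiff_const)
    have hinner : ContDiff ℝ r ((fun y => w (y + d)) ∘ (Linvmap n A t)) :=
      hwt.comp (Linvmap n A t).contDiff
    have gen : ∀ y, rhoMap n A t (g y) - rhoMap n A t y = Lmap n A t (w y) := fun y => by
      rw [rhoMap_eq n A t (g y), rhoMap_eq n A t y, hwdef]
      simp only
      rw [map_sub]
      abel
    have hFid : (fun x => (rhoMap n A t ∘ g ∘ rhoInv n A t) x - x) =
        (Lmap n A t) ∘ ((fun y => w (y + d)) ∘ (Linvmap n A t)) := by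
      funext x
      calc (rhoMap n A t ∘ g ∘ rhoInv n A t) x - x
          = rhoMap n A t (g (rhoInv n A t x)) - rhoMap n A t (rhoInv n A t x) := by
            simp only [Function.comp_apply]
            rw [rhoMap_rhoInv n A hAne t x]
        _ = Lmap n A t (w (rhoInv n A t x)) := gen _
        _ = ((Lmap n A t) ∘ ((fun y => w (y + d)) ∘ (Linvmap n A t))) x := by
            rw [hrinv x]; rfl
    have hLn : ‖Lmap n A t‖ ≤ B * A ^ 4 := Lmap_norm_le n A hA t ht
    have hLin : ‖Linvmap n A t‖ ≤ B / A ^ 2 := Linvmap_norm_le n A hA t ht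
    have hLinpow : ‖Linvmap n A t‖ ^ r ≤ (B / A ^ 2) ^ r :=
      pow_le_pow_left₀ (norm_nonneg _) hLin r
    have hprod : (∏ _i : Fin r, ‖Linvmap n A t‖) = ‖Linvmap n A t‖ ^ r := by
      rw [Finset.prod_const, Finset.card_univ, Fintype.card_fin]
    -- pointwise bound for f - id
    have hbound1 : ∀ x : E n, ‖iteratedFDeriv ℝ r
        (fun y => (rhoMap n A t ∘ g ∘ rhoInv n A t) y - y) x‖ ≤
        c * ‖iteratedFDeriv ℝ r w (Linvmap n A t x + d)‖ := by
      intro x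
      have e1 : iteratedFDeriv ℝ r (fun y => (rhoMap n A t ∘ g ∘ rhoInv n A t) y - y) x
          = (Lmap n A t).compContinuousMultilinearMap
            (iteratedFDeriv ℝ r ((fun y => w (y + d)) ∘ Linvmap n A t) x) := by
        rw [hFid]
        exact (Lmap n A t).iteratedFDeriv_comp_left hinner.contDiffAt le_rfl
      have e2 : iteratedFDeriv ℝ r ((fun y => w (y + d)) ∘ Linvmap n A t) x
          = (iteratedFDeriv ℝ r (fun y => w (y + d))
              (Linvmap n A t x)).compContinuousLinearMap (fun _ => Linvmap n A t) :=
        (Linvmap n A t).iteratedFDeriv_comp_right hwt x le_rfl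
      have e3 : iteratedFDeriv ℝ r (fun y => w (y + d)) (Linvmap n A t x)
          = iteratedFDeriv ℝ r w (Linvmap n A t x + d) := iteratedFDeriv_shift w d r _
      rw [e1]
      calc ‖(Lmap n A t).compContinuousMultilinearMap
            (iteratedFDeriv ℝ r ((fun y => w (y + d)) ∘ Linvmap n A t) x)‖
          ≤ ‖Lmap n A t‖ * ‖iteratedFDeriv ℝ r ((fun y => w (y + d)) ∘ Linvmap n A t) x‖ :=
            ContinuousLinearMap.norm_compContinuousMultilinearMap_le _ _
        _ ≤ ‖Lmap n A t‖ * (‖iteratedFDeriv ℝ r w (Linvmap n A t x + d)‖ *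
              ‖Linvmap n A t‖ ^ r) := by
            refine mul_le_mul_of_nonneg_left ?_ (norm_nonneg _)
            rw [e2, e3]
            have := ContinuousMultilinearMap.norm_compContinuousLinearMap_le
              (iteratedFDeriv ℝ r w (Linvmap n A t x + d))
              (fun _ : Fin r => Linvmap n A t)
            rw [hprod] at this
            exact this
        _ ≤ (B * A ^ 4) * (‖iteratedFDeriv ℝ r w (Linvmap n A t x + d)‖ *
              (B / A ^ 2) ^ r) := by
            refine mul_le_mul hLn ?_ (by positivity) (by positivity)
            exact mul_le_mul_of_nonneg_left hLinpow (norm_nonneg _)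
        _ = c * ‖iteratedFDeriv ℝ r w (Linvmap n A t x + d)‖ := by
            rw [← hcA]; ring
    -- pointwise bound for ℓ ∘ rhoInv
    have hpowc : (B / A ^ 2) ^ r ≤ c := by
      have hpow0 : (0:ℝ) ≤ (B / A ^ 2) ^ r := by positivity
      have hA4 : (1:ℝ) ≤ A ^ 4 := one_le_pow₀ hA
      have h1 : (1:ℝ) ≤ B * A ^ 4 := by nlinarith
      have h2 := mul_le_mul_of_nonneg_right h1 hpow0
      rw [one_mul] at h2
      linarith [hcA.le, hcA.ge]
    have hℓeq : (fun x => ℓ (rhoInv n A t x)) =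
        (fun y => ℓ (y + d)) ∘ (Linvmap n A t) := by
      funext x; rw [hrinv x]; rfl
    have hℓt : ContDiff ℝ r (fun y => ℓ (y + d)) := hℓ.comp (contDiff_id.add contDiff_const)
    have hbound2 : ∀ x : E n, ‖iteratedFDeriv ℝ r (fun x => ℓ (rhoInv n A t x)) x‖ ≤
        c * ‖iteratedFDeriv ℝ r ℓ (Linvmap n A t x + d)‖ := by
      intro x
      have e2 : iteratedFDeriv ℝ r ((fun y => ℓ (y + d)) ∘ Linvmap n A t) x
          = (iteratedFDeriv ℝ r (fun y => ℓ (y + d))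
              (Linvmap n A t x)).compContinuousLinearMap (fun _ => Linvmap n A t) :=
        (Linvmap n A t).iteratedFDeriv_comp_right hℓt x le_rfl
      have e3 : iteratedFDeriv ℝ r (fun y => ℓ (y + d)) (Linvmap n A t x)
          = iteratedFDeriv ℝ r ℓ (Linvmap n A t x + d) := iteratedFDeriv_shift ℓ d r _
      rw [hℓeq, e2]
      calc ‖(iteratedFDeriv ℝ r (fun y => ℓ (y + d))
              (Linvmap n A t x)).compContinuousLinearMap (fun _ => Linvmap n A t)‖
          ≤ ‖iteratedFDeriv ℝ r (fun y => ℓ (y + d)) (Linvmap n A t x)‖ *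
              ∏ _i : Fin r, ‖Linvmap n A t‖ :=
            ContinuousMultilinearMap.norm_compContinuousLinearMap_le _ _
        _ ≤ ‖iteratedFDeriv ℝ r ℓ (Linvmap n A t x + d)‖ * (B / A ^ 2) ^ r := by
            rw [hprod, e3]
            exact mul_le_mul_of_nonneg_left hLinpow (norm_nonneg _)
        _ ≤ c * ‖iteratedFDeriv ℝ r ℓ (Linvmap n A t x + d)‖ := by
            rw [mul_comm]
            exact mul_le_mul_of_nonneg_right hpowc (norm_nonneg _)
    -- conclude in ℝ≥0∞
    have key1 : supDeriv r (fun y => (rhoMap n A t ∘ g ∘ rhoInv n A t) y - y) ≤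
        ENNReal.ofReal c * supDeriv r w := by
      refine iSup_le fun x => ?_
      calc (‖iteratedFDeriv ℝ r (fun y => (rhoMap n A t ∘ g ∘ rhoInv n A t) y - y) x‖₊ : ℝ≥0∞)
          = ENNReal.ofReal ‖iteratedFDeriv ℝ r
              (fun y => (rhoMap n A t ∘ g ∘ rhoInv n A t) y - y) x‖ :=
            (ENNReal.ofReal_eq_coe_nnreal (norm_nonneg _)).symm
        _ ≤ ENNReal.ofReal (c * ‖iteratedFDeriv ℝ r w (Linvmap n A t x + d)‖) :=
            ENNReal.ofReal_le_ofReal (hbound1 x)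
        _ = ENNReal.ofReal c * ENNReal.ofReal ‖iteratedFDeriv ℝ r w (Linvmap n A t x + d)‖ :=
            ENNReal.ofReal_mul hc0
        _ = ENNReal.ofReal c * (‖iteratedFDeriv ℝ r w (Linvmap n A t x + d)‖₊ : ℝ≥0∞) := by
            exact congrArg _ (ENNReal.ofReal_eq_coe_nnreal (norm_nonneg _))
        _ ≤ ENNReal.ofReal c * supDeriv r w :=
            mul_le_mul_right (le_iSup (fun z : E n =>
              (‖iteratedFDeriv ℝ r w z‖₊ : ℝ≥0∞)) (Linvmap n A t x + d)) _
    have key2 : supDeriv r (fun x => ℓ (rhoInv n A t x)) ≤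
        ENNReal.ofReal c * supDeriv r ℓ := by
      refine iSup_le fun x => ?_
      calc (‖iteratedFDeriv ℝ r (fun x => ℓ (rhoInv n A t x)) x‖₊ : ℝ≥0∞)
          = ENNReal.ofReal ‖iteratedFDeriv ℝ r (fun x => ℓ (rhoInv n A t x)) x‖ :=
            (ENNReal.ofReal_eq_coe_nnreal (norm_nonneg _)).symm
        _ ≤ ENNReal.ofReal (c * ‖iteratedFDeriv ℝ r ℓ (Linvmap n A t x + d)‖) :=
            ENNReal.ofReal_le_ofReal (hbound2 x)
        _ = ENNReal.ofReal c * ENNReal.ofReal ‖iteratedFDeriv ℝ r ℓ (Linvmap n A t x + d)‖ :=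
            ENNReal.ofReal_mul hc0
        _ = ENNReal.ofReal c * (‖iteratedFDeriv ℝ r ℓ (Linvmap n A t x + d)‖₊ : ℝ≥0∞) := by
            exact congrArg _ (ENNReal.ofReal_eq_coe_nnreal (norm_nonneg _))
        _ ≤ ENNReal.ofReal c * supDeriv r ℓ :=
            mul_le_mul_right (le_iSup (fun z : E n =>
              (‖iteratedFDeriv ℝ r ℓ z‖₊ : ℝ≥0∞)) (Linvmap n A t x + d)) _
    rw [muStar]
    refine max_le ?_ ?_
    · exact key1.trans (mul_le_mul_right (le_max_left _ _) _)
    · exact key2.trans (mul_le_mul_right (le_max_right _ _) _)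

end
end
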